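/- arXiv:2305.11730 — 3 statements merged into one kernel-verified Lean document; each statement's English description precedes it below -/
import Mathlib

section
/- Let k be a positive integer, a, b, c ∈ Z, n ∈ N with a+b even and (a,b), (c, 2n+a+b-c) strictly above y = x−1. Consider lattice paths with step set {(1,0),(0,1),(2,0)} where double horizontal steps (2,0) are only allowed to end on the line y = x (with weight 1). Then the generating function of such paths from (a,b) to (c, 2n+a+b-c) staying weakly above y = x−1 with exactly k double horizontal steps equals e_{c-b-2k+2}(x^±) − e_{c-b-2k-2}(x^±) if b−a ≥ 2, and e_{c-a-2k}(x^±) − e_{c-b-2k-2}(x^±) if b = a. -/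
/-- A lattice point in `ℤ²`. -/
abbrev Pt : Type := ℤ × ℤ

/-- The list of lattice points visited by a path starting at `p` with step list `l`. -/
def pathPoints : Pt → List Pt → List Pt
  | p, [] => [p]
  | p, s :: rest => p :: pathPoints (p + s) rest

/-- The ring of Laurent polynomials in the variables `x_1, …, x_n`, in which the
weights (Laurent monomials in `x_1^{±1}, …, x_n^{±1}`) live. -/
noncomputable abbrev Laur (n : ℕ) : Type := AddMonoidAlgebra ℤ (Fin n →₀ ℤ)

/-- The Laurent monomial `x_{k+1}^e` (0-based index `k : ℤ`); junk value `1` out of range. -/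
noncomputable def Xpm (n : ℕ) (k e : ℤ) : Laur n :=
  if h : 0 ≤ k ∧ k.toNat < n then
    AddMonoidAlgebra.single (Finsupp.single ⟨k.toNat, h.2⟩ e) 1
  else 1

/-- The `2n` variables `x_1, x_1^{-1}, x_2, x_2^{-1}, …, x_n, x_n^{-1}`. -/
noncomputable def xpmVar (n : ℕ) (j : Fin (2 * n)) : Laur n :=
  AddMonoidAlgebra.single
    (Finsupp.single ⟨(j : ℕ) / 2, by have := j.isLt; omega⟩
      (if (j : ℕ) % 2 = 0 then 1 else -1)) 1

/-- `e_r(x^±)`: the `r`-th elementary symmetric polynomial in the `2n` variables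
`x_1, x_1^{-1}, …, x_n, x_n^{-1}`; zero for `r < 0`. -/
noncomputable def epm (n : ℕ) (r : ℤ) : Laur n :=
  if 0 ≤ r then
    ∑ s ∈ Finset.powersetCard r.toNat (Finset.univ : Finset (Fin (2 * n))),
      ∏ i ∈ s, xpmVar n i
  else 0

/-- The weight of a step `s` starting at point `p` under the modified `e`-labelling
relative to the (even) reference `a + b`: a unit horizontal step starting at
`p = (i,j)` has weight `x_{(i+j-a-b)/2+1}^{-1}` if `i+j ≡ a+b (mod 2)` and
`x_{(i+j-a-b+1)/2}` otherwise; all other steps have weight `1`. -/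
noncomputable def stepW (n : ℕ) (a b : ℤ) (p s : Pt) : Laur n :=
  if s = ((1 : ℤ), (0 : ℤ)) then
    (if (p.1 + p.2 - a - b) % 2 = 0 then Xpm n ((p.1 + p.2 - a - b) / 2) (-1)
     else Xpm n ((p.1 + p.2 - a - b + 1) / 2 - 1) 1)
  else 1

/-- The weight of a path: the product of the weights of its steps. -/
noncomputable def pathW (n : ℕ) (a b : ℤ) : Pt → List Pt → Laur n
  | _, [] => 1
  | p, s :: rest => stepW n a b p s * pathW n a b (p + s) rest

/-- Double horizontal steps `(2,0)` may only end on the line `y = x`,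
i.e. start at a point with `y = x + 2`. -/
def DoubleOK : Pt → List Pt → Prop
  | _, [] => True
  | p, s :: rest => (s = ((2:ℤ),(0:ℤ)) → p.2 = p.1 + 2) ∧ DoubleOK (p + s) rest

namespace S7

def st1 : Pt := ((1:ℤ),(0:ℤ))
def st2 : Pt := ((0:ℤ),(1:ℤ))
def st3 : Pt := ((2:ℤ),(0:ℤ))

def Valid (c d : ℤ) (k : ℕ) (p : Pt) (l : List Pt) : Prop :=
  (∀ s ∈ l, s = st1 ∨ s = st2 ∨ s = st3) ∧
  p + l.sum = (c, d) ∧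
  (∀ q ∈ pathPoints p l, q.1 - 1 ≤ q.2) ∧
  DoubleOK p l ∧
  l.count st3 = k

lemma sum_coords (l : List Pt) (h : ∀ s ∈ l, s = st1 ∨ s = st2 ∨ s = st3) :
    (l.length : ℤ) ≤ l.sum.1 + l.sum.2 := by
  induction l with
  | nil => simp
  | cons s t ih =>
    have hs := h s List.mem_cons_self
    have ht := ih (fun x hx => h x (List.mem_cons_of_mem _ hx))
    rcases hs with hs | hs | hs <;>
      simp only [List.sum_cons, List.length_cons, Prod.fst_add, Prod.snd_add, hs, st1, st2, st3] <;>
      push_cast <;> omega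

lemma exists_code (l : List Pt) (h : ∀ s ∈ l, s = st1 ∨ s = st2 ∨ s = st3) :
    ∃ l' : List (Fin 3), l'.map ![st1, st2, st3] = l := by
  induction l with
  | nil => exact ⟨[], rfl⟩
  | cons s t ih =>
    obtain ⟨l', hl'⟩ := ih (fun x hx => h x (List.mem_cons_of_mem _ hx))
    rcases h s List.mem_cons_self with hs | hs | hs
    · exact ⟨0 :: l', by simp [hl', hs]⟩
    · exact ⟨1 :: l', by simp [hl', hs]⟩
    · exact ⟨2 :: l', by simp [hl', hs]⟩

lemma valid_finite (c d : ℤ) (k : ℕ) (p : Pt) : {l | Valid c d k p l}.Finite := by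
  apply Set.Finite.subset
    (Set.Finite.image (fun l : List (Fin 3) => l.map ![st1, st2, st3])
      (List.finite_length_le (Fin 3) (c + d - p.1 - p.2).toNat))
  intro l hl
  obtain ⟨h1, h2, -⟩ := hl
  obtain ⟨l', hl'⟩ := exists_code l h1
  refine ⟨l', ?_, hl'⟩
  have hb := sum_coords l h1
  have h2' : p.1 + l.sum.1 = c ∧ p.2 + l.sum.2 = d := by
    have := h2
    rw [Prod.ext_iff] at this
    exact ⟨this.1, this.2⟩
  have hlen : (l.length : ℤ) ≤ c + d - p.1 - p.2 := by omega
  have : l'.length = l.length := by rw [← hl']; simp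
  simp only [Set.mem_setOf_eq]
  omega

end S7
namespace S7

noncomputable def GF (n : ℕ) (c d a b : ℤ) (k : ℕ) (p : Pt) : Laur n :=
  ∑ᶠ l ∈ {l : List Pt | Valid c d k p l}, pathW n a b p l

lemma GF_eq_sum (n : ℕ) (c d a b : ℤ) (k : ℕ) (p : Pt) :
    GF n c d a b k p = ∑ l ∈ (valid_finite c d k p).toFinset, pathW n a b p l := by
  exact finsum_mem_eq_finite_toFinset_sum _ (valid_finite c d k p)

lemma self_mem_pathPoints (p : Pt) (l : List Pt) : p ∈ pathPoints p l := by
  cases l <;> simp [pathPoints]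

lemma GF_empty (n : ℕ) (c d a b : ℤ) (k : ℕ) (p : Pt) (h : p.2 < p.1 - 1) :
    GF n c d a b k p = 0 := by
  rw [GF_eq_sum]
  apply Finset.sum_eq_zero
  intro l hl
  rw [Set.Finite.mem_toFinset] at hl
  exact absurd (hl.2.2.1 p (self_mem_pathPoints p l)) (by omega)

lemma valid_nil_iff (c d : ℤ) (k : ℕ) (p : Pt) :
    Valid c d k p [] ↔ p = (c, d) ∧ k = 0 ∧ p.1 - 1 ≤ p.2 := by
  constructor
  · rintro ⟨-, h2, h3, -, h5⟩
    refine ⟨by simpa using h2, by simpa using h5.symm, ?_⟩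
    exact h3 p (self_mem_pathPoints p [])
  · rintro ⟨h1, h2, h3⟩
    refine ⟨by simp, by simpa using h1, ?_, trivial, by simp [h2, st3]⟩
    intro q hq
    simp [pathPoints] at hq
    subst hq; exact h3

lemma GF_base (n : ℕ) (c d a b : ℤ) (k : ℕ) (p : Pt) (hbar : p.1 - 1 ≤ p.2)
    (h : p.1 + p.2 = c + d) :
    GF n c d a b k p = if p = (c, d) ∧ k = 0 then 1 else 0 := by
  have honly : ∀ l, Valid c d k p l → l = [] := by
    intro l hv
    rcases l with - | ⟨s, t⟩
    · rfl
    exfalso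
    have hb := sum_coords _ hv.1
    have h2 := hv.2.1
    rw [Prod.ext_iff] at h2
    simp only [Prod.fst_add, Prod.snd_add] at h2
    rw [List.length_cons] at hb
    push_cast at hb
    omega
  by_cases hc : p = (c, d) ∧ k = 0
  · have hset : {l : List Pt | Valid c d k p l} = {[]} := by
      ext l
      simp only [Set.mem_setOf_eq, Set.mem_singleton_iff]
      constructor
      · exact honly l
      · rintro rfl
        exact (valid_nil_iff c d k p).2 ⟨hc.1, hc.2, hbar⟩
    rw [GF, hset, finsum_mem_singleton, if_pos hc]
    rfl
  · have hset : {l : List Pt | Valid c d k p l} = ∅ := by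
      ext l
      simp only [Set.mem_setOf_eq, Set.mem_empty_iff_false, iff_false]
      intro hv
      have := honly l hv
      subst this
      rw [valid_nil_iff] at hv
      exact hc ⟨hv.1, hv.2.1⟩
    rw [GF, hset, finsum_mem_empty, if_neg hc]

end S7
namespace S7

lemma st_ne_12 : st1 ≠ st2 := by simp [st1, st2]
lemma st_ne_13 : st1 ≠ st3 := by simp [st1, st3]
lemma st_ne_23 : st2 ≠ st3 := by simp [st2, st3]

lemma sum_decomp {n : ℕ} (f : List Pt → Laur n) (S S1 S2 S3 : Set (List Pt))
    (hS : S.Finite) (h1 : S1.Finite) (h2 : S2.Finite) (h3 : S3.Finite)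
    (hiff : ∀ l, l ∈ S ↔ (∃ r ∈ S1, l = st1 :: r) ∨ (∃ r ∈ S2, l = st2 :: r) ∨
      (∃ r ∈ S3, l = st3 :: r)) :
    ∑ l ∈ hS.toFinset, f l =
      ∑ r ∈ h1.toFinset, f (st1 :: r) + ∑ r ∈ h2.toFinset, f (st2 :: r) +
      ∑ r ∈ h3.toFinset, f (st3 :: r) := by
  classical
  have key : hS.toFinset = (h1.toFinset.image (st1 :: ·)) ∪
      ((h2.toFinset.image (st2 :: ·)) ∪ (h3.toFinset.image (st3 :: ·))) := by
    ext l
    simp only [Set.Finite.mem_toFinset, Finset.mem_union, Finset.mem_image,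
      Set.Finite.mem_toFinset, hiff]
    constructor
    · rintro (⟨r, hr, rfl⟩ | ⟨r, hr, rfl⟩ | ⟨r, hr, rfl⟩)
      · exact Or.inl ⟨r, hr, rfl⟩
      · exact Or.inr (Or.inl ⟨r, hr, rfl⟩)
      · exact Or.inr (Or.inr ⟨r, hr, rfl⟩)
    · rintro (⟨r, hr, rfl⟩ | ⟨r, hr, rfl⟩ | ⟨r, hr, rfl⟩)
      · exact Or.inl ⟨r, hr, rfl⟩
      · exact Or.inr (Or.inl ⟨r, hr, rfl⟩)
      · exact Or.inr (Or.inr ⟨r, hr, rfl⟩)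
  have hd1 : Disjoint (h1.toFinset.image (st1 :: ·))
      ((h2.toFinset.image (st2 :: ·)) ∪ (h3.toFinset.image (st3 :: ·))) := by
    rw [Finset.disjoint_left]
    rintro l hl hl'
    simp only [Finset.mem_image, Finset.mem_union] at hl hl'
    obtain ⟨r, -, rfl⟩ := hl
    rcases hl' with ⟨r', -, h⟩ | ⟨r', -, h⟩
    · injection h with h' _; exact st_ne_12 h'.symm
    · injection h with h' _; exact st_ne_13 h'.symm
  have hd2 : Disjoint (h2.toFinset.image (st2 :: ·)) (h3.toFinset.image (st3 :: ·)) := by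
    rw [Finset.disjoint_left]
    rintro l hl hl'
    simp only [Finset.mem_image] at hl hl'
    obtain ⟨r, -, rfl⟩ := hl
    obtain ⟨r', -, h⟩ := hl'
    injection h with h' _; exact st_ne_23 h'.symm
  rw [key, Finset.sum_union hd1, Finset.sum_union hd2,
    Finset.sum_image (fun x _ y _ h => List.cons_injective h),
    Finset.sum_image (fun x _ y _ h => List.cons_injective h),
    Finset.sum_image (fun x _ y _ h => List.cons_injective h), add_assoc]

lemma count_cons_pt (s : Pt) (l : List Pt) (t : Pt) :
    (s :: l).count t = l.count t + if s = t then 1 else 0 := by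
  simp only [List.count_cons, beq_iff_eq]

lemma valid_cons_iff (c d : ℤ) (k : ℕ) (p : Pt) (hbar : p.1 - 1 ≤ p.2)
    (hne : p.1 + p.2 ≠ c + d) (l : List Pt) :
    Valid c d k p l ↔
      (∃ r ∈ {r : List Pt | Valid c d k (p + st1) r}, l = st1 :: r) ∨
      (∃ r ∈ {r : List Pt | Valid c d k (p + st2) r}, l = st2 :: r) ∨
      (∃ r ∈ {r : List Pt | 1 ≤ k ∧ p.2 = p.1 + 2 ∧ Valid c d (k - 1) (p + st3) r},
        l = st3 :: r) := by
  constructor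
  · intro hv
    rcases l with - | ⟨s, r⟩
    · exfalso
      rw [valid_nil_iff] at hv
      exact hne (by rw [hv.1])
    · obtain ⟨h1, h2, h3, h4, h5⟩ := hv
      have hsteps : ∀ x ∈ r, x = st1 ∨ x = st2 ∨ x = st3 :=
        fun x hx => h1 x (List.mem_cons_of_mem _ hx)
      have hsum : (p + s) + r.sum = (c, d) := by
        rw [List.sum_cons, ← add_assoc] at h2
        exact h2
      have hpts : ∀ q ∈ pathPoints (p + s) r, q.1 - 1 ≤ q.2 := by
        intro q hq
        exact h3 q (by simp [pathPoints, hq])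
      have hdo : DoubleOK (p + s) r := h4.2
      rw [count_cons_pt] at h5
      rcases h1 s List.mem_cons_self with hs | hs | hs
      · subst hs
        refine Or.inl ⟨r, ⟨hsteps, hsum, hpts, hdo, ?_⟩, rfl⟩
        rw [if_neg st_ne_13] at h5
        omega
      · subst hs
        refine Or.inr (Or.inl ⟨r, ⟨hsteps, hsum, hpts, hdo, ?_⟩, rfl⟩)
        rw [if_neg st_ne_23] at h5
        omega
      · subst hs
        rw [if_pos rfl] at h5
        refine Or.inr (Or.inr ⟨r, ⟨by omega, h4.1 rfl, ⟨hsteps, hsum, hpts, hdo, by omega⟩⟩, rfl⟩)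
  · rintro (⟨r, hr, rfl⟩ | ⟨r, hr, rfl⟩ | ⟨r, ⟨hk, hdiag, hr⟩, rfl⟩)
    · obtain ⟨h1, h2, h3, h4, h5⟩ := hr
      refine ⟨?_, ?_, ?_, ?_, ?_⟩
      · intro s hs
        rcases List.mem_cons.1 hs with rfl | hs'
        · exact Or.inl rfl
        · exact h1 s hs'
      · rw [List.sum_cons, ← add_assoc]; exact h2
      · intro q hq
        rcases (by simpa [pathPoints] using hq : q = p ∨ q ∈ pathPoints (p + st1) r) with rfl | hq'
        · exact hbar
        · exact h3 q hq'
      · exact ⟨fun h => absurd h st_ne_13, h4⟩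
      · rw [count_cons_pt, if_neg st_ne_13, h5]; omega
    · obtain ⟨h1, h2, h3, h4, h5⟩ := hr
      refine ⟨?_, ?_, ?_, ?_, ?_⟩
      · intro s hs
        rcases List.mem_cons.1 hs with rfl | hs'
        · exact Or.inr (Or.inl rfl)
        · exact h1 s hs'
      · rw [List.sum_cons, ← add_assoc]; exact h2
      · intro q hq
        rcases (by simpa [pathPoints] using hq : q = p ∨ q ∈ pathPoints (p + st2) r) with rfl | hq'
        · exact hbar
        · exact h3 q hq'
      · exact ⟨fun h => absurd h st_ne_23, h4⟩
      · rw [count_cons_pt, if_neg st_ne_23, h5]; omega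
    · obtain ⟨h1, h2, h3, h4, h5⟩ := hr
      refine ⟨?_, ?_, ?_, ?_, ?_⟩
      · intro s hs
        rcases List.mem_cons.1 hs with rfl | hs'
        · exact Or.inr (Or.inr rfl)
        · exact h1 s hs'
      · rw [List.sum_cons, ← add_assoc]; exact h2
      · intro q hq
        rcases (by simpa [pathPoints] using hq : q = p ∨ q ∈ pathPoints (p + st3) r) with rfl | hq'
        · exact hbar
        · exact h3 q hq'
      · exact ⟨fun _ => hdiag, h4⟩
      · rw [count_cons_pt, if_pos rfl, h5]; omega

end S7
namespace S7

lemma pathW_cons (n : ℕ) (a b : ℤ) (p s : Pt) (r : List Pt) :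
    pathW n a b p (s :: r) = stepW n a b p s * pathW n a b (p + s) r := rfl

lemma stepW_st2 (n : ℕ) (a b : ℤ) (p : Pt) : stepW n a b p st2 = 1 := by
  rw [stepW, if_neg]
  simp [st2]

lemma stepW_st3 (n : ℕ) (a b : ℤ) (p : Pt) : stepW n a b p st3 = 1 := by
  rw [stepW, if_neg]
  simp [st3]

lemma GF_step (n : ℕ) (c d a b : ℤ) (k : ℕ) (p : Pt) (hbar : p.1 - 1 ≤ p.2)
    (hne : p.1 + p.2 ≠ c + d) :
    GF n c d a b k p = stepW n a b p st1 * GF n c d a b k (p + st1) +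
      GF n c d a b k (p + st2) +
      (if 1 ≤ k ∧ p.2 = p.1 + 2 then GF n c d a b (k - 1) (p + st3) else 0) := by
  have h3fin : {r : List Pt | 1 ≤ k ∧ p.2 = p.1 + 2 ∧ Valid c d (k - 1) (p + st3) r}.Finite :=
    Set.Finite.subset (valid_finite c d (k - 1) (p + st3)) (fun r hr => hr.2.2)
  rw [GF_eq_sum, sum_decomp (pathW n a b p) _ _ _ _ (valid_finite c d k p)
    (valid_finite c d k (p + st1)) (valid_finite c d k (p + st2)) h3fin
    (valid_cons_iff c d k p hbar hne)]
  congr 1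
  · congr 1
    · rw [GF_eq_sum, Finset.mul_sum]
      apply Finset.sum_congr rfl
      intro r _
      rw [pathW_cons]
    · rw [GF_eq_sum]
      apply Finset.sum_congr rfl
      intro r _
      rw [pathW_cons, stepW_st2, one_mul]
  · by_cases hc : 1 ≤ k ∧ p.2 = p.1 + 2
    · rw [if_pos hc, GF_eq_sum]
      have hst : h3fin.toFinset = (valid_finite c d (k - 1) (p + st3)).toFinset := by
        ext r
        simp only [Set.Finite.mem_toFinset, Set.mem_setOf_eq]
        exact ⟨fun h => h.2.2, fun h => ⟨hc.1, hc.2, h⟩⟩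
      rw [hst]
      apply Finset.sum_congr rfl
      intro r _
      rw [pathW_cons, stepW_st3, one_mul]
    · rw [if_neg hc]
      apply Finset.sum_eq_zero
      intro r hr
      rw [Set.Finite.mem_toFinset] at hr
      exact absurd ⟨hr.1, hr.2.1⟩ hc

end S7
namespace S7

noncomputable def Esum {n : ℕ} (s : Finset (Fin (2 * n))) (r : ℤ) : Laur n :=
  if 0 ≤ r then ∑ t ∈ Finset.powersetCard r.toNat s, ∏ i ∈ t, xpmVar n i else 0

lemma Esum_neg {n : ℕ} (s : Finset (Fin (2 * n))) {r : ℤ} (h : r < 0) : Esum s r = 0 :=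
  if_neg (not_le.2 h)

lemma Esum_insert {n : ℕ} {a : Fin (2 * n)} {s : Finset (Fin (2 * n))} (ha : a ∉ s) (r : ℤ) :
    Esum (insert a s) r = Esum s r + xpmVar n a * Esum s (r - 1) := by
  classical
  rcases lt_trichotomy r 0 with h | h | h
  · rw [Esum_neg _ h, Esum_neg _ h, Esum_neg _ (by omega : r - 1 < 0), mul_zero, add_zero]
  · subst h
    rw [Esum, Esum, if_pos le_rfl, if_pos le_rfl, Esum_neg _ (by omega : (0:ℤ) - 1 < 0),
      mul_zero, add_zero]
    simp [Finset.powersetCard_zero]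
  · have h1 : (0:ℤ) ≤ r := by omega
    have h2 : (0:ℤ) ≤ r - 1 := by omega
    have h3 : r.toNat = (r - 1).toNat + 1 := by omega
    rw [Esum, Esum, Esum, if_pos h1, if_pos h1, if_pos h2, h3,
      Finset.powersetCard_succ_insert ha, Finset.sum_union, Finset.sum_image]
    · congr 1
      rw [Finset.mul_sum]
      apply Finset.sum_congr rfl
      intro t ht
      rw [Finset.mem_powersetCard] at ht
      rw [Finset.prod_insert (fun hc => ha (ht.1 hc))]
    · intro x hx y hy hxy
      rw [Finset.mem_coe, Finset.mem_powersetCard] at hx hy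
      have hax : a ∉ x := fun hc => ha (hx.1 hc)
      have hay : a ∉ y := fun hc => ha (hy.1 hc)
      rw [← Finset.erase_insert hax, ← Finset.erase_insert hay, hxy]
    · rw [Finset.disjoint_left]
      intro t ht ht'
      rw [Finset.mem_powersetCard] at ht
      rw [Finset.mem_image] at ht'
      obtain ⟨u, -, rfl⟩ := ht'
      exact ha (ht.1 (Finset.mem_insert_self a u))

noncomputable def Eb (n m : ℕ) (r : ℤ) : Laur n :=
  Esum (Finset.univ.filter (fun i : Fin (2 * n) => 2 * m ≤ (i : ℕ))) r

lemma Eb_neg (n m : ℕ) {r : ℤ} (h : r < 0) : Eb n m r = 0 := Esum_neg _ h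

lemma Eb_top (n : ℕ) (r : ℤ) : Eb n n r = if r = 0 then 1 else 0 := by
  have hset : (Finset.univ.filter (fun i : Fin (2 * n) => 2 * n ≤ (i : ℕ))) = ∅ := by
    apply Finset.filter_eq_empty_iff.2
    intro i _
    have := i.isLt
    omega
  rw [Eb, hset]
  rcases lt_trichotomy r 0 with h | h | h
  · rw [Esum_neg _ h, if_neg (by omega)]
  · subst h
    rw [Esum, if_pos le_rfl, if_pos rfl]
    simp [Finset.powersetCard_zero]
  · rw [Esum, if_pos (by omega : (0:ℤ) ≤ r), if_neg (by omega)]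
    have : Finset.powersetCard r.toNat (∅ : Finset (Fin (2 * n))) = ∅ := by
      rw [Finset.powersetCard_eq_empty]
      simp
      omega
    rw [this, Finset.sum_empty]

lemma xpm_pair {n m : ℕ} (h0 : 2 * m < 2 * n) (h1 : 2 * m + 1 < 2 * n) :
    xpmVar n ⟨2 * m, h0⟩ * xpmVar n ⟨2 * m + 1, h1⟩ = 1 := by
  rw [xpmVar, xpmVar]
  have e0 : (2 * m) % 2 = 0 := by omega
  have e1 : (2 * m + 1) % 2 = 1 := by omega
  have d0 : (2 * m) / 2 = m := by omega
  have d1 : (2 * m + 1) / 2 = m := by omega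
  simp only [e0, e1, d0, d1, if_true, Nat.one_ne_zero, if_false]
  rw [AddMonoidAlgebra.single_mul_single, mul_one]
  have : (Finsupp.single (⟨m, by omega⟩ : Fin n) (1:ℤ)) +
      (Finsupp.single (⟨m, by omega⟩ : Fin n) (-1:ℤ)) = 0 := by
    rw [← Finsupp.single_add]
    simp
  rw [this]
  rfl

lemma Eb_rec {n : ℕ} (m : ℕ) (hm : m < n) (r : ℤ) :
    Eb n m r = Eb n (m + 1) r +
      (xpmVar n ⟨2 * m, by omega⟩ + xpmVar n ⟨2 * m + 1, by omega⟩) * Eb n (m + 1) (r - 1) +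
      Eb n (m + 1) (r - 2) := by
  classical
  have hset : (Finset.univ.filter (fun i : Fin (2 * n) => 2 * m ≤ (i : ℕ))) =
      insert ⟨2 * m, by omega⟩ (insert ⟨2 * m + 1, by omega⟩
        (Finset.univ.filter (fun i : Fin (2 * n) => 2 * (m + 1) ≤ (i : ℕ)))) := by
    ext i
    simp only [Finset.mem_filter, Finset.mem_univ, true_and, Finset.mem_insert, Fin.ext_iff]
    omega
  have hmem1 : (⟨2 * m + 1, by omega⟩ : Fin (2 * n)) ∉
      (Finset.univ.filter (fun i : Fin (2 * n) => 2 * (m + 1) ≤ (i : ℕ))) := by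
    simp only [Finset.mem_filter, Finset.mem_univ, true_and]
    omega
  have hmem0 : (⟨2 * m, by omega⟩ : Fin (2 * n)) ∉
      insert ⟨2 * m + 1, by omega⟩
        (Finset.univ.filter (fun i : Fin (2 * n) => 2 * (m + 1) ≤ (i : ℕ))) := by
    simp only [Finset.mem_insert, Fin.ext_iff, Finset.mem_filter, Finset.mem_univ, true_and]
    omega
  rw [Eb, hset, Esum_insert hmem0, Esum_insert hmem1, Esum_insert hmem1]
  have e1 : r - 1 - 1 = r - 2 := by ring
  rw [e1]
  have hpair := xpm_pair (n := n) (m := m) (by omega) (by omega)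
  set y0 := xpmVar n (⟨2 * m, by omega⟩ : Fin (2 * n))
  set y1 := xpmVar n (⟨2 * m + 1, by omega⟩ : Fin (2 * n))
  set A := Eb n (m + 1) r
  set B := Eb n (m + 1) (r - 1)
  set C := Eb n (m + 1) (r - 2)
  show A + y1 * B + y0 * (B + y1 * C) = A + (y0 + y1) * B + C
  have : y0 * (y1 * C) = C := by rw [← mul_assoc, hpair, one_mul]
  calc A + y1 * B + y0 * (B + y1 * C) = A + y1 * B + y0 * B + y0 * (y1 * C) := by ring
    _ = A + (y0 + y1) * B + C := by rw [this]; ring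

end S7
namespace S7

lemma stepW_even {n : ℕ} (a b : ℤ) (m : ℕ) (hm : m < n) (p : Pt)
    (hp : p.1 + p.2 - a - b = 2 * (m:ℤ)) :
    stepW n a b p st1 = xpmVar n ⟨2 * m + 1, by omega⟩ := by
  rw [stepW, if_pos (show st1 = ((1:ℤ),(0:ℤ)) from rfl), hp, if_pos (by omega : 2 * (m:ℤ) % 2 = 0),
    (by omega : 2 * (m:ℤ) / 2 = (m:ℤ)), Xpm,
    dif_pos ⟨Int.natCast_nonneg m, by simpa using hm⟩, xpmVar]
  congr 1
  congr 1
  all_goals first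
    | exact Fin.ext (by simp; omega)
    | simp [(by omega : (2 * m + 1) % 2 = 1)]

lemma stepW_odd {n : ℕ} (a b : ℤ) (m : ℕ) (hm : m < n) (p : Pt)
    (hp : p.1 + p.2 - a - b = 2 * (m:ℤ) + 1) :
    stepW n a b p st1 = xpmVar n ⟨2 * m, by omega⟩ := by
  rw [stepW, if_pos (show st1 = ((1:ℤ),(0:ℤ)) from rfl), hp, if_neg (by omega : ¬((2 * (m:ℤ) + 1) % 2 = 0)),
    (by omega : (2 * (m:ℤ) + 1 + 1) / 2 - 1 = (m:ℤ)), Xpm,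
    dif_pos ⟨Int.natCast_nonneg m, by simpa using hm⟩, xpmVar]
  congr 1
  congr 1
  all_goals first
    | exact Fin.ext (by simp; omega)
    | simp [(by omega : (2 * m) % 2 = 0)]

end S7
namespace S7

lemma main_lem {n : ℕ} (a b c d : ℤ) (hab : (a + b) % 2 = 0)
    (hcd : c + d = a + b + 2 * (n:ℤ)) (hdc : c ≤ d) :
    ∀ M m : ℕ, m + M = n → ∀ p : Pt, ∀ k : ℕ,
      p.1 + p.2 = a + b + 2 * (m:ℤ) → p.1 ≤ p.2 →
      GF n c d a b k p =
        Eb n m (if p.2 = p.1 ∨ k = 0 then c - p.1 - 2 * (k:ℤ) else c - p.2 - 2 * (k:ℤ) + 2) -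
        Eb n m (c - p.2 - 2 * (k:ℤ) - 2) := by
  intro M
  induction M with
  | zero =>
    intro m hm p k hsum hup
    have hmn : m = n := by omega
    rw [hmn]
    have hpc : p.1 + p.2 = c + d := by omega
    rw [GF_base n c d a b k p (by omega) hpc, Eb_top, Eb_top]
    have hc2 : c ≤ p.2 := by omega
    rw [if_neg (by omega : ¬(c - p.2 - 2 * (k:ℤ) - 2 = 0)), sub_zero]
    by_cases hp : p = (c, d) ∧ k = 0
    · obtain ⟨hp1, hk⟩ := hp
      subst hk
      have h1 : p.1 = c := by rw [hp1]
      have h2 : p.2 = d := by rw [hp1]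
      rw [if_pos ⟨hp1, rfl⟩, if_pos (Or.inr rfl),
        if_pos (show c - p.1 - 2 * ((0:ℕ):ℤ) = 0 by push_cast; omega)]
    · rw [if_neg hp]
      have hpne : ¬(p.1 = c ∧ p.2 = d ∧ k = 0) := by
        intro h
        exact hp ⟨Prod.ext_iff.2 ⟨h.1, h.2.1⟩, h.2.2⟩
      by_cases hcond : p.2 = p.1 ∨ k = 0
      · rw [if_pos hcond, if_neg]
        intro h0
        rcases hcond with hq | hq
        · rcases Nat.eq_zero_or_pos k with hk | hk
          · subst hk
            push_cast at h0
            exact hpne ⟨by omega, by omega, rfl⟩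
          · omega
        · subst hq
          push_cast at h0
          exact hpne ⟨by omega, by omega, rfl⟩
      · rw [if_neg hcond, if_neg]
        push_neg at hcond
        obtain ⟨hq1, hq2⟩ := hcond
        have hk1 : 1 ≤ k := by omega
        intro h0
        omega
  | succ M ih =>
    intro m hm p k hsum hup
    have hmn : m < n := by omega
    have hbar : p.1 - 1 ≤ p.2 := by omega
    have hne : p.1 + p.2 ≠ c + d := by omega
    have hF : p + st1 = ((p.1 + 1, p.2) : Pt) := by
      rw [Prod.ext_iff]; constructor <;> simp [st1]
    have hG : p + st2 = ((p.1, p.2 + 1) : Pt) := by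
      rw [Prod.ext_iff]; constructor <;> simp [st2]
    have hE : p + st3 = ((p.1 + 2, p.2) : Pt) := by
      rw [Prod.ext_iff]; constructor <;> simp [st3]
    have h11 : ((p.1 + 1, p.2) : Pt) + st1 = ((p.1 + 2, p.2) : Pt) := by
      rw [Prod.ext_iff]; constructor <;> simp [st1] <;> ring
    have h12 : ((p.1 + 1, p.2) : Pt) + st2 = ((p.1 + 1, p.2 + 1) : Pt) := by
      rw [Prod.ext_iff]; constructor <;> simp [st2]
    have h21 : ((p.1, p.2 + 1) : Pt) + st1 = ((p.1 + 1, p.2 + 1) : Pt) := by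
      rw [Prod.ext_iff]; constructor <;> simp [st1]
    have h22 : ((p.1, p.2 + 1) : Pt) + st2 = ((p.1, p.2 + 2) : Pt) := by
      rw [Prod.ext_iff]; constructor <;> simp [st2] <;> ring
    rw [GF_step n c d a b k p hbar hne, hF, hG, hE,
      GF_step n c d a b k ((p.1 + 1, p.2) : Pt) (by simp; omega) (by simp; omega),
      h11, h12,
      GF_step n c d a b k ((p.1, p.2 + 1) : Pt) (by simp; omega) (by simp; omega),
      h21, h22]
    rw [if_neg (show ¬(1 ≤ k ∧ ((p.1 + 1, p.2) : Pt).2 = ((p.1 + 1, p.2) : Pt).1 + 2) by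
        simp; intro _; omega),
      if_neg (show ¬(1 ≤ k ∧ ((p.1, p.2 + 1) : Pt).2 = ((p.1, p.2 + 1) : Pt).1 + 2) by
        simp; intro _; omega)]
    have hw_even : stepW n a b p st1 = xpmVar n ⟨2 * m + 1, by omega⟩ :=
      stepW_even a b m hmn p (by omega)
    have hw_odd1 : stepW n a b ((p.1 + 1, p.2) : Pt) st1 = xpmVar n ⟨2 * m, by omega⟩ :=
      stepW_odd a b m hmn _ (by simp; omega)
    have hw_odd2 : stepW n a b ((p.1, p.2 + 1) : Pt) st1 = xpmVar n ⟨2 * m, by omega⟩ :=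
      stepW_odd a b m hmn _ (by simp; omega)
    rw [hw_even, hw_odd1, hw_odd2]
    have hpair : xpmVar n (⟨2 * m, by omega⟩ : Fin (2 * n)) *
        xpmVar n (⟨2 * m + 1, by omega⟩ : Fin (2 * n)) = 1 := xpm_pair (by omega) (by omega)
    have key : ∀ X Y Z D : Laur n,
        xpmVar n (⟨2 * m + 1, by omega⟩ : Fin (2 * n)) *
            (xpmVar n (⟨2 * m, by omega⟩ : Fin (2 * n)) * X + Y + 0) +
          (xpmVar n (⟨2 * m, by omega⟩ : Fin (2 * n)) * Y + Z + 0) + D =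
        X + (xpmVar n (⟨2 * m, by omega⟩ : Fin (2 * n)) +
          xpmVar n (⟨2 * m + 1, by omega⟩ : Fin (2 * n))) * Y + Z + D := by
      intro X Y Z D
      linear_combination X * hpair
    rw [key]
    have IH : ∀ (x y : ℤ) (k' : ℕ), x + y = a + b + 2 * (m:ℤ) + 2 → x ≤ y →
        GF n c d a b k' ((x, y) : Pt) =
          Eb n (m + 1) (if y = x ∨ k' = 0 then c - x - 2 * (k':ℤ) else c - y - 2 * (k':ℤ) + 2) -
          Eb n (m + 1) (c - y - 2 * (k':ℤ) - 2) := by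
      intro x y k' hl1 hl2
      have := ih (m + 1) (by omega) ((x, y) : Pt) k' (by simp; push_cast; omega) (by simp [hl2])
      simpa using this
    rcases (show p.2 = p.1 ∨ p.1 + 2 ≤ p.2 by omega) with hu | hu
    · -- u = 0
      have hP0 : GF n c d a b k ((p.1 + 2, p.2) : Pt) = 0 :=
        GF_empty n c d a b k _ (by simp; omega)
      have hPm := IH (p.1 + 1) (p.2 + 1) k (by omega) (by omega)
      have hP2 := IH p.1 (p.2 + 2) k (by omega) (by omega)
      rw [if_pos (Or.inl (show p.2 + 1 = p.1 + 1 by omega))] at hPm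
      rw [show (if p.2 + 2 = p.1 ∨ k = 0 then c - p.1 - 2 * (k:ℤ)
          else c - (p.2 + 2) - 2 * (k:ℤ) + 2) = c - p.1 - 2 * (k:ℤ) by
        split_ifs <;> omega] at hP2
      rw [hP0, hPm, hP2, if_neg (show ¬(1 ≤ k ∧ p.2 = p.1 + 2) by omega),
        if_pos (Or.inl hu), Eb_rec m hmn (c - p.1 - 2 * (k:ℤ)),
        Eb_rec m hmn (c - p.2 - 2 * (k:ℤ) - 2), hu]
      ring_nf
    · rcases Nat.eq_zero_or_pos k with hk0 | hk1
      · -- k = 0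
        subst hk0
        have hP0 := IH (p.1 + 2) p.2 0 (by omega) (by omega)
        have hPm := IH (p.1 + 1) (p.2 + 1) 0 (by omega) (by omega)
        have hP2 := IH p.1 (p.2 + 2) 0 (by omega) (by omega)
        rw [if_pos (Or.inr rfl)] at hP0 hPm hP2
        rw [hP0, hPm, hP2, if_neg (show ¬(1 ≤ 0 ∧ p.2 = p.1 + 2) by omega),
          if_pos (Or.inr rfl), Eb_rec m hmn (c - p.1 - 2 * ((0:ℕ):ℤ)),
          Eb_rec m hmn (c - p.2 - 2 * ((0:ℕ):ℤ) - 2)]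
        ring_nf
      · by_cases hu2 : p.2 = p.1 + 2
        · -- u = 2, k ≥ 1
          have hP0 := IH (p.1 + 2) p.2 k (by omega) (by omega)
          have hPm := IH (p.1 + 1) (p.2 + 1) k (by omega) (by omega)
          have hP2 := IH p.1 (p.2 + 2) k (by omega) (by omega)
          have hD := IH (p.1 + 2) p.2 (k - 1) (by omega) (by omega)
          rw [if_pos (Or.inl hu2)] at hP0 hD
          rw [if_neg (show ¬(p.2 + 1 = p.1 + 1 ∨ k = 0) by omega)] at hPm
          rw [if_neg (show ¬(p.2 + 2 = p.1 ∨ k = 0) by omega)] at hP2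
          rw [show ((k - 1 : ℕ) : ℤ) = (k:ℤ) - 1 by omega] at hD
          rw [hP0, hPm, hP2, if_pos ⟨hk1, hu2⟩, hD,
            if_neg (show ¬(p.2 = p.1 ∨ k = 0) by omega),
            Eb_rec m hmn (c - p.2 - 2 * (k:ℤ) + 2),
            Eb_rec m hmn (c - p.2 - 2 * (k:ℤ) - 2), hu2]
          ring_nf
        · -- u ≥ 4, k ≥ 1
          have hu4 : p.1 + 4 ≤ p.2 := by omega
          have hP0 := IH (p.1 + 2) p.2 k (by omega) (by omega)
          have hPm := IH (p.1 + 1) (p.2 + 1) k (by omega) (by omega)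
          have hP2 := IH p.1 (p.2 + 2) k (by omega) (by omega)
          rw [if_neg (show ¬(p.2 = p.1 + 2 ∨ k = 0) by omega)] at hP0
          rw [if_neg (show ¬(p.2 + 1 = p.1 + 1 ∨ k = 0) by omega)] at hPm
          rw [if_neg (show ¬(p.2 + 2 = p.1 ∨ k = 0) by omega)] at hP2
          rw [hP0, hPm, hP2, if_neg (show ¬(1 ≤ k ∧ p.2 = p.1 + 2) by omega),
            if_neg (show ¬(p.2 = p.1 ∨ k = 0) by omega),
            Eb_rec m hmn (c - p.2 - 2 * (k:ℤ) + 2),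
            Eb_rec m hmn (c - p.2 - 2 * (k:ℤ) - 2)]
          ring_nf

end S7
namespace S7

lemma Eb_zero (n : ℕ) (r : ℤ) : Eb n 0 r = epm n r := by
  have hset : (Finset.univ.filter (fun i : Fin (2 * n) => 2 * 0 ≤ (i : ℕ))) =
      (Finset.univ : Finset (Fin (2 * n))) := by
    apply Finset.filter_true_of_mem
    intro i _
    omega
  rw [Eb, hset]
  rfl

end S7
/-- **(Even orthogonal paths with `k` double horizontal steps.)** For `k ≥ 1`,
`a + b` even, `(a,b)` and `(c, 2n+a+b-c)` strictly above `y = x - 1`, the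
generating function of lattice paths from `(a,b)` to `(c, 2n+a+b-c)` with steps
`(1,0), (0,1), (2,0)`, double steps only ending on `y = x` (weight `1`), staying
weakly above `y = x - 1`, with exactly `k` double steps, equals
`e_{c-b-2k+2}(x^±) - e_{c-b-2k-2}(x^±)` if `b - a ≥ 2`, and
`e_{c-a-2k}(x^±) - e_{c-b-2k-2}(x^±)` if `b = a`. -/
theorem stmt7 (n k : ℕ) (hk : 0 < k) (a b c : ℤ) (hab : (a + b) % 2 = 0)
    (h1 : a - 1 < b) (h2 : c - 1 < 2 * (n : ℤ) + a + b - c) :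
    (2 ≤ b - a →
      (∑ᶠ (l : List Pt) (_ :
          (∀ s ∈ l, s = ((1:ℤ),(0:ℤ)) ∨ s = ((0:ℤ),(1:ℤ)) ∨ s = ((2:ℤ),(0:ℤ))) ∧
          (a, b) + l.sum = (c, 2 * (n : ℤ) + a + b - c) ∧
          (∀ p ∈ pathPoints (a, b) l, p.1 - 1 ≤ p.2) ∧
          DoubleOK (a, b) l ∧
          l.count ((2:ℤ),(0:ℤ)) = k),
        pathW n a b (a, b) l)
        = epm n (c - b - 2 * (k : ℤ) + 2) - epm n (c - b - 2 * (k : ℤ) - 2)) ∧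
    (b = a →
      (∑ᶠ (l : List Pt) (_ :
          (∀ s ∈ l, s = ((1:ℤ),(0:ℤ)) ∨ s = ((0:ℤ),(1:ℤ)) ∨ s = ((2:ℤ),(0:ℤ))) ∧
          (a, b) + l.sum = (c, 2 * (n : ℤ) + a + b - c) ∧
          (∀ p ∈ pathPoints (a, b) l, p.1 - 1 ≤ p.2) ∧
          DoubleOK (a, b) l ∧
          l.count ((2:ℤ),(0:ℤ)) = k),
        pathW n a b (a, b) l)
        = epm n (c - a - 2 * (k : ℤ)) - epm n (c - b - 2 * (k : ℤ) - 2)) := by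
  constructor
  · intro hba
    show S7.GF n c (2 * (n : ℤ) + a + b - c) a b k ((a, b) : Pt) = _
    rw [S7.main_lem a b c (2 * (n : ℤ) + a + b - c) hab (by ring) (by omega) n 0 (by omega)
      ((a, b) : Pt) k (by simp) (by simp; omega)]
    rw [if_neg (show ¬(((a, b) : Pt).2 = ((a, b) : Pt).1 ∨ k = 0) by simp; omega)]
    rw [S7.Eb_zero, S7.Eb_zero]
  · intro hba
    show S7.GF n c (2 * (n : ℤ) + a + b - c) a b k ((a, b) : Pt) = _
    rw [S7.main_lem a b c (2 * (n : ℤ) + a + b - c) hab (by ring) (by omega) n 0 (by omega)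
      ((a, b) : Pt) k (by simp) (by simp; omega)]
    rw [if_pos (Or.inl (show ((a, b) : Pt).2 = ((a, b) : Pt).1 by simp [hba]))]
    rw [S7.Eb_zero, S7.Eb_zero]
end

section
/- Let a, b, c ∈ Z and n ∈ N with a+b even and (a,b), (c, 2n+a+b-c) strictly above y = x−1. The generating function of lattice paths from (a,b) to (c, 2n+a+b-c) with step set {(1,0),(0,1),(2,0)}, where double horizontal steps may only end on the line y = x (weight 1) and unit horizontal steps carry the modified e-labelling, staying weakly above y = x−1, equals e_{c-a}(x^±) if b = a, and e_{c-a}(x^±) + e_{c-b}(x^±) if b − a ≥ 2. -/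
/-- pair-swapped index -/
def keyN (j : ℕ) : ℕ := if j % 2 = 0 then j + 1 else j - 1

lemma keyN_lt {n t : ℕ} (h : t < 2 * n) : keyN t < 2 * n := by
  unfold keyN; split <;> omega

/-- partial elementary symmetric polynomial: over variables with key index ≥ t -/
noncomputable def Ee (n t : ℕ) (r : ℤ) : Laur n :=
  if 0 ≤ r then
    ∑ s ∈ Finset.powersetCard r.toNat
        ((Finset.univ : Finset (Fin (2 * n))).filter (fun j : Fin (2*n) => t ≤ keyN j.val)),
      ∏ i ∈ s, xpmVar n i
  else 0

/-- the weight variable consumed at level `t` -/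
noncomputable def wv (n t : ℕ) : Laur n :=
  if h : keyN t < 2 * n then xpmVar n ⟨keyN t, h⟩ else 1

lemma Ee_neg {n t : ℕ} {r : ℤ} (h : r < 0) : Ee n t r = 0 := by
  simp [Ee, not_le.2 h]

lemma Ee_zero (n t : ℕ) : Ee n t 0 = 1 := by
  simp [Ee]

lemma Ee_eq_epm (n : ℕ) (r : ℤ) : Ee n 0 r = epm n r := by
  have hf : ((Finset.univ : Finset (Fin (2 * n))).filter (fun j : Fin (2*n) => 0 ≤ keyN j.val))
      = Finset.univ := Finset.filter_true_of_mem (fun x _ => Nat.zero_le _)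
  unfold Ee epm
  rw [hf]

lemma filter_key_eq_insert {n t : ℕ} (h : t < 2 * n) :
    ((Finset.univ : Finset (Fin (2 * n))).filter (fun j : Fin (2*n) => t ≤ keyN j.val))
      = insert (⟨keyN t, keyN_lt h⟩ : Fin (2 * n))
          ((Finset.univ : Finset (Fin (2 * n))).filter (fun j : Fin (2*n) => t + 1 ≤ keyN j.val)) := by
  ext j
  simp only [Finset.mem_filter, Finset.mem_univ, true_and, Finset.mem_insert, Fin.ext_iff]
  have hj := j.isLt
  unfold keyN
  rcases Nat.even_or_odd (j : ℕ) with hje | hjo <;> rcases Nat.even_or_odd t with hte | hto <;>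
    simp only [Nat.even_iff, Nat.odd_iff] at * <;> split_ifs <;> omega

lemma key_not_mem {n t : ℕ} (h : t < 2 * n) :
    (⟨keyN t, keyN_lt h⟩ : Fin (2 * n)) ∉
      ((Finset.univ : Finset (Fin (2 * n))).filter (fun j : Fin (2*n) => t + 1 ≤ keyN j.val)) := by
  simp only [Finset.mem_filter, Finset.mem_univ, true_and, not_le]
  unfold keyN
  split_ifs <;> omega

lemma Ee_split {n t : ℕ} (h : t < 2 * n) (r : ℤ) :
    Ee n t r = Ee n (t + 1) r + wv n t * Ee n (t + 1) (r - 1) := by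
  have hw : wv n t = xpmVar n ⟨keyN t, keyN_lt h⟩ := by
    unfold wv; rw [dif_pos (keyN_lt h)]
  rcases lt_trichotomy r 0 with hr | hr | hr
  · rw [Ee_neg hr, Ee_neg hr, Ee_neg (by omega), mul_zero, add_zero]
  · subst hr
    rw [Ee_zero, Ee_zero, Ee_neg (by norm_num), mul_zero, add_zero]
  · have hr1 : r.toNat = (r - 1).toNat + 1 := by omega
    unfold Ee
    rw [if_pos hr.le, if_pos (by omega), if_pos (by omega), hw]
    rw [filter_key_eq_insert h, hr1, Finset.powersetCard_succ_insert (key_not_mem h)]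
    rw [Finset.sum_union, Finset.sum_image, Finset.mul_sum]
    · congr 1
      apply Finset.sum_congr rfl
      intro s hs
      rw [Finset.prod_insert]
      intro hmem
      exact key_not_mem h ((Finset.mem_powersetCard.1 hs).1 hmem)
    · intro s hs t' ht' hst
      have hs' := (Finset.mem_powersetCard.1 hs).1
      have ht'' := (Finset.mem_powersetCard.1 ht').1
      have : ∀ u ∈ Finset.powersetCard (r-1).toNat ((Finset.univ : Finset (Fin (2*n))).filter
          (fun j : Fin (2*n) => t + 1 ≤ keyN j.val)), (⟨keyN t, keyN_lt h⟩ : Fin (2*n)) ∉ u := by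
        intro u hu hmem
        exact key_not_mem h ((Finset.mem_powersetCard.1 hu).1 hmem)
      have h1 := this s hs
      have h2 := this t' ht'
      rw [← Finset.erase_insert h1, ← Finset.erase_insert h2, hst]
    · rw [Finset.disjoint_left]
      intro u hu hu'
      obtain ⟨v, hv, rfl⟩ := Finset.mem_image.1 hu'
      have := (Finset.mem_powersetCard.1 hu).1
      exact key_not_mem h (this (Finset.mem_insert_self _ _))
      
lemma Ee_top {n t : ℕ} (h : 2 * n ≤ t) (r : ℤ) :
    Ee n t r = if r = 0 then 1 else 0 := by
  have hfil : ((Finset.univ : Finset (Fin (2 * n))).filter (fun j : Fin (2*n) => t ≤ keyN j.val)) = ∅ := by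
    apply Finset.filter_false_of_mem
    intro j _
    have := j.isLt
    unfold keyN
    split <;> omega
  rcases lt_trichotomy r 0 with hr | hr | hr
  · rw [Ee_neg hr, if_neg (by omega)]
  · subst hr; rw [Ee_zero, if_pos rfl]
  · unfold Ee
    rw [if_pos hr.le, hfil, if_neg (by omega)]
    rw [Finset.powersetCard_eq_empty.2 (by simp; omega), Finset.sum_empty]

lemma xpmVar_mk (n j : ℕ) (h : j < 2 * n) :
    xpmVar n ⟨j, h⟩ = AddMonoidAlgebra.single
      (Finsupp.single (⟨j / 2, by omega⟩ : Fin n) (if j % 2 = 0 then (1:ℤ) else -1)) 1 := rfl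

lemma wv_mul {n t : ℕ} (ht : t % 2 = 0) (h : t + 1 < 2 * n) : wv n t * wv n (t + 1) = 1 := by
  have h1 : keyN t = t + 1 := by unfold keyN; split <;> omega
  have h2 : keyN (t + 1) = t := by unfold keyN; split <;> omega
  unfold wv
  rw [dif_pos (keyN_lt (by omega)), dif_pos (keyN_lt (by omega))]
  have k1 : (⟨keyN t, keyN_lt (show t < 2*n by omega)⟩ : Fin (2*n)) = ⟨t+1, by omega⟩ :=
    Fin.ext h1
  have k2 : (⟨keyN (t+1), keyN_lt (show t+1 < 2*n by omega)⟩ : Fin (2*n)) = ⟨t, by omega⟩ :=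
    Fin.ext h2
  rw [k1, k2, xpmVar_mk, xpmVar_mk]
  rw [AddMonoidAlgebra.single_mul_single, one_mul, if_neg (by omega), if_pos ht]
  have hd : (t+1)/2 = t/2 := by omega
  simp only [hd]
  rw [← Finsupp.single_add]
  norm_num
  rfl

lemma Ee_symm {n : ℕ} : ∀ (k t : ℕ), t % 2 = 0 → t + 2 * k = 2 * n → ∀ r : ℤ,
    Ee n t r = Ee n t (2 * n - t - r) := by
  intro k
  induction k with
  | zero =>
    intro t ht htn r
    rw [Ee_top (by omega), Ee_top (by omega)]
    have : (2 * (n:ℤ) - t - r = 0) ↔ (r = 2 * (n:ℤ) - t) := by omega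
    by_cases hr : r = 0
    · subst hr; rw [if_pos rfl, if_pos (by omega)]
    · rw [if_neg hr, if_neg (by omega)]
  | succ k ih =>
    intro t ht htn r
    have h1 : t < 2 * n := by omega
    have h2 : t + 1 < 2 * n := by omega
    have ihs := ih (t + 2) (by omega) (by omega)
    have expand : ∀ s : ℤ, Ee n t s
        = Ee n (t+2) s + (wv n t + wv n (t+1)) * Ee n (t+2) (s-1) + Ee n (t+2) (s-2) := by
      intro s
      rw [Ee_split h1, Ee_split h2, Ee_split h2 (s - 1)]
      have h12 : t + 1 + 1 = t + 2 := by omega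
      rw [h12]
      have hw := wv_mul ht h2
      have e1 : s - 1 - 1 = s - 2 := by ring
      rw [e1]
      linear_combination (Ee n (t+2) (s-2)) * hw
    rw [expand r, expand (2 * n - t - r)]
    rw [ihs r, ihs (r-1), ihs (r-2)]
    have e1 : 2 * (n:ℤ) - ((t + 2 : ℕ) : ℤ) - r = 2 * n - t - r - 2 := by push_cast; ring
    have e2 : 2 * (n:ℤ) - ((t + 2 : ℕ) : ℤ) - (r - 1) = 2 * n - t - r - 1 := by push_cast; ring
    have e3 : 2 * (n:ℤ) - ((t + 2 : ℕ) : ℤ) - (r - 2) = 2 * n - t - r := by push_cast; ring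
    rw [e1, e2, e3]
    ring



def VSet (n : ℕ) (a b c : ℤ) (p : Pt) : Set (List Pt) :=
  {l | (∀ s ∈ l, s = ((1:ℤ),(0:ℤ)) ∨ s = ((0:ℤ),(1:ℤ)) ∨ s = ((2:ℤ),(0:ℤ))) ∧
       p + l.sum = ((c, 2 * (n : ℤ) + a + b - c) : Pt) ∧
       (∀ q ∈ pathPoints p l, q.1 - 1 ≤ q.2) ∧
       DoubleOK p l}

lemma mem_pathPoints_self (p : Pt) (l : List Pt) : p ∈ pathPoints p l := by
  cases l <;> simp [pathPoints]

lemma steps_len : ∀ l : List Pt,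
    (∀ s ∈ l, s = ((1:ℤ),(0:ℤ)) ∨ s = ((0:ℤ),(1:ℤ)) ∨ s = ((2:ℤ),(0:ℤ))) →
    (l.length : ℤ) ≤ l.sum.1 + l.sum.2
  | [], _ => by simp
  | s :: rest, h => by
    have ih := steps_len rest (fun x hx => h x (List.mem_cons_of_mem _ hx))
    have hs := h s (List.mem_cons_self)
    simp only [List.sum_cons, List.length_cons, Prod.fst_add, Prod.snd_add]
    rcases hs with rfl | rfl | rfl <;> push_cast <;> simp <;> omega

lemma V_below (n : ℕ) (a b c : ℤ) (p : Pt) (h : ¬ (p.1 - 1 ≤ p.2)) :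
    VSet n a b c p = ∅ := by
  apply Set.eq_empty_iff_forall_notMem.2
  intro l hl
  exact h (hl.2.2.1 p (mem_pathPoints_self p l))

lemma V_sub_top (n : ℕ) (a b c : ℤ) (p : Pt) (h : 2*(n:ℤ)+a+b ≤ p.1 + p.2) :
    VSet n a b c p ⊆ {[]} := by
  intro l hl
  obtain ⟨h1, h2, _, _⟩ := hl
  have hlen := steps_len l h1
  have e1 : p.1 + l.sum.1 = c := congrArg Prod.fst h2
  have e2 : p.2 + l.sum.2 = 2*(n:ℤ)+a+b-c := congrArg Prod.snd h2
  have : l.length = 0 := by omega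
  rw [Set.mem_singleton_iff, ← List.length_eq_zero_iff]
  exact this

noncomputable def SumV (n : ℕ) (a b c : ℤ) (p : Pt) : Laur n :=
  ∑ᶠ l ∈ VSet n a b c p, pathW n a b p l

lemma V_cons (n : ℕ) (a b c : ℤ) (p : Pt) (habv : p.1 - 1 ≤ p.2)
    (hlt : p.1 + p.2 < 2*(n:ℤ)+a+b) :
    VSet n a b c p =
      (List.cons ((1:ℤ),(0:ℤ)) '' VSet n a b c (p + ((1:ℤ),(0:ℤ)))) ∪
      (List.cons ((0:ℤ),(1:ℤ)) '' VSet n a b c (p + ((0:ℤ),(1:ℤ)))) ∪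
      (if p.2 = p.1 + 2 then List.cons ((2:ℤ),(0:ℤ)) '' VSet n a b c (p + ((2:ℤ),(0:ℤ)))
       else ∅) := by
  ext l
  constructor
  · rintro ⟨h1, h2, h3, h4⟩
    match l with
    | [] =>
      exfalso
      have hp : p = ((c, 2*(n:ℤ)+a+b-c) : Pt) := by simpa using h2
      rw [hp] at hlt
      simp at hlt
    | s :: rest =>
      have hs := h1 s (List.mem_cons_self)
      have hrest : rest ∈ VSet n a b c (p + s) := by
        refine ⟨fun x hx => h1 x (List.mem_cons_of_mem _ hx), ?_, ?_, h4.2⟩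
        · rw [← h2, List.sum_cons, add_assoc]
        · intro q hq
          exact h3 q (List.mem_cons_of_mem _ hq)
      rcases hs with rfl | rfl | rfl
      · exact Or.inl (Or.inl ⟨rest, hrest, rfl⟩)
      · exact Or.inl (Or.inr ⟨rest, hrest, rfl⟩)
      · refine Or.inr ?_
        rw [if_pos (h4.1 rfl)]
        exact ⟨rest, hrest, rfl⟩
  · intro hl
    have key : ∀ s : Pt, (s = ((1:ℤ),(0:ℤ)) ∨ s = ((0:ℤ),(1:ℤ)) ∨ s = ((2:ℤ),(0:ℤ))) →
        (s = ((2:ℤ),(0:ℤ)) → p.2 = p.1 + 2) →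
        ∀ rest ∈ VSet n a b c (p + s), s :: rest ∈ VSet n a b c p := by
      rintro s hs hsd rest ⟨g1, g2, g3, g4⟩
      refine ⟨?_, ?_, ?_, hsd, g4⟩
      · intro x hx
        rcases List.mem_cons.1 hx with rfl | hx
        · exact hs
        · exact g1 x hx
      · rw [List.sum_cons, ← add_assoc]
        exact g2
      · intro q hq
        rcases List.mem_cons.1 hq with rfl | hq
        · exact habv
        · exact g3 q hq
    rcases hl with (⟨rest, hrest, rfl⟩ | ⟨rest, hrest, rfl⟩) | hD
    · exact key _ (Or.inl rfl) (by intro h; injection h with h1 _; norm_num at h1) rest hrest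
    · exact key _ (Or.inr (Or.inl rfl)) (by intro h; injection h with h1 _; norm_num at h1)
        rest hrest
    · by_cases hdiag : p.2 = p.1 + 2
      · rw [if_pos hdiag] at hD
        obtain ⟨rest, hrest, rfl⟩ := hD
        exact key _ (Or.inr (Or.inr rfl)) (fun _ => hdiag) rest hrest
      · rw [if_neg hdiag] at hD
        exact absurd hD (Set.notMem_empty _)

lemma V_finite (n : ℕ) (a b c : ℤ) :
    ∀ (k : ℕ) (p : Pt), 2*(n:ℤ)+a+b - (p.1+p.2) ≤ k → (VSet n a b c p).Finite := by
  intro k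
  induction k with
  | zero =>
    intro p hp
    exact (Set.finite_singleton []).subset (V_sub_top n a b c p (by omega))
  | succ k ih =>
    intro p hp
    by_cases habv : p.1 - 1 ≤ p.2
    · by_cases hlt : p.1 + p.2 < 2*(n:ℤ)+a+b
      · rw [V_cons n a b c p habv hlt]
        refine Set.Finite.union (Set.Finite.union ?_ ?_) ?_
        · exact (ih _ (by simp; push_cast at hp ⊢; omega)).image _
        · exact (ih _ (by simp; push_cast at hp ⊢; omega)).image _
        · split_ifs
          · exact (ih _ (by simp; push_cast at hp ⊢; omega)).image _
          · exact Set.finite_empty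
      · exact (Set.finite_singleton []).subset (V_sub_top n a b c p (by omega))
    · rw [V_below n a b c p habv]
      exact Set.finite_empty

lemma V_finite' (n : ℕ) (a b c : ℤ) (p : Pt) : (VSet n a b c p).Finite :=
  V_finite n a b c (2*(n:ℤ)+a+b - (p.1+p.2)).toNat p (Int.self_le_toNat _)

lemma SumV_below (n : ℕ) (a b c : ℤ) (p : Pt) (h : ¬ (p.1 - 1 ≤ p.2)) :
    SumV n a b c p = 0 := by
  rw [SumV, V_below n a b c p h, finsum_mem_empty]

lemma SumV_top (n : ℕ) (a b c : ℤ) (p : Pt) (hp : p.1 + p.2 = 2*(n:ℤ)+a+b)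
    (habv : p.1 - 1 ≤ p.2) :
    SumV n a b c p = if p = ((c, 2*(n:ℤ)+a+b-c) : Pt) then 1 else 0 := by
  by_cases hE : p = ((c, 2*(n:ℤ)+a+b-c) : Pt)
  · rw [if_pos hE]
    have hV : VSet n a b c p = {[]} := by
      apply Set.eq_of_subset_of_subset (V_sub_top n a b c p (by omega))
      intro l hl
      rw [Set.mem_singleton_iff] at hl
      subst hl
      refine ⟨by simp, by simpa using hE, ?_, trivial⟩
      intro q hq
      simp [pathPoints] at hq
      subst hq
      exact habv
    rw [SumV, hV, finsum_mem_singleton]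
    simp [pathW]
  · rw [if_neg hE]
    have hV : VSet n a b c p = ∅ := by
      apply Set.eq_empty_iff_forall_notMem.2
      intro l hl
      have := V_sub_top n a b c p (by omega) hl
      rw [Set.mem_singleton_iff] at this
      subst this
      exact hE (by simpa using hl.2.1)
    rw [SumV, hV, finsum_mem_empty]

lemma SumV_cons (n : ℕ) (a b c : ℤ) (p : Pt) (habv : p.1 - 1 ≤ p.2)
    (hlt : p.1 + p.2 < 2*(n:ℤ)+a+b) :
    SumV n a b c p =
      stepW n a b p ((1:ℤ),(0:ℤ)) * SumV n a b c (p + ((1:ℤ),(0:ℤ)))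
      + SumV n a b c (p + ((0:ℤ),(1:ℤ)))
      + (if p.2 = p.1 + 2 then SumV n a b c (p + ((2:ℤ),(0:ℤ))) else 0) := by
  have himg : ∀ s : Pt,
      (∑ᶠ l ∈ (List.cons s '' VSet n a b c (p + s)), pathW n a b p l)
        = stepW n a b p s * SumV n a b c (p + s) := by
    intro s
    rw [finsum_mem_image (List.cons_injective.injOn)]
    rw [finsum_mem_eq_finite_toFinset_sum _ (V_finite' n a b c (p+s)), SumV,
      finsum_mem_eq_finite_toFinset_sum _ (V_finite' n a b c (p+s)), Finset.mul_sum]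
    exact Finset.sum_congr rfl (fun l _ => by simp [pathW])
  have hd12 : Disjoint (List.cons ((1:ℤ),(0:ℤ)) '' VSet n a b c (p + ((1:ℤ),(0:ℤ))))
      (List.cons ((0:ℤ),(1:ℤ)) '' VSet n a b c (p + ((0:ℤ),(1:ℤ)))) := by
    rw [Set.disjoint_left]
    rintro l ⟨x, _, rfl⟩ ⟨y, _, h⟩
    simp at h
  have hsV : stepW n a b p ((0:ℤ),(1:ℤ)) = 1 := by simp [stepW]
  have hsD : stepW n a b p ((2:ℤ),(0:ℤ)) = 1 := by simp [stepW]
  rw [SumV, V_cons n a b c p habv hlt]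
  by_cases hd : p.2 = p.1 + 2
  · rw [if_pos hd, if_pos hd]
    have hdAB_C : Disjoint
        ((List.cons ((1:ℤ),(0:ℤ)) '' VSet n a b c (p + ((1:ℤ),(0:ℤ)))) ∪
         (List.cons ((0:ℤ),(1:ℤ)) '' VSet n a b c (p + ((0:ℤ),(1:ℤ)))))
        (List.cons ((2:ℤ),(0:ℤ)) '' VSet n a b c (p + ((2:ℤ),(0:ℤ)))) := by
      rw [Set.disjoint_left]
      rintro l (⟨x, _, rfl⟩ | ⟨x, _, rfl⟩) ⟨y, _, h⟩ <;> simp at h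
    rw [finsum_mem_union hdAB_C (Set.Finite.union ((V_finite' n a b c _).image _)
        ((V_finite' n a b c _).image _)) ((V_finite' n a b c _).image _)]
    rw [finsum_mem_union hd12 ((V_finite' n a b c _).image _) ((V_finite' n a b c _).image _)]
    rw [himg, himg, himg, hsV, hsD, one_mul, one_mul]
  · rw [if_neg hd, if_neg hd, Set.union_empty, add_zero]
    rw [finsum_mem_union hd12 ((V_finite' n a b c _).image _) ((V_finite' n a b c _).image _)]
    rw [himg, himg, hsV, one_mul]

/- ### matching the step weight -/

lemma stepW_eq (n : ℕ) (a b : ℤ) (t : ℕ) (p : Pt) (hp : p.1 + p.2 = a + b + t)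
    (hlt : t < 2 * n) : stepW n a b p ((1:ℤ),(0:ℤ)) = wv n t := by
  have hd : p.1 + p.2 - a - b = (t : ℤ) := by omega
  unfold stepW wv
  rw [if_pos rfl, hd, dif_pos (keyN_lt hlt)]
  rcases Nat.even_or_odd t with hte | hto
  · rw [Nat.even_iff] at hte
    have ht2 : (t : ℤ) % 2 = 0 := by omega
    rw [if_pos ht2]
    have hk : keyN t = t + 1 := by unfold keyN; split <;> omega
    have k1 : (⟨keyN t, keyN_lt hlt⟩ : Fin (2*n)) = ⟨t+1, by omega⟩ := Fin.ext hk
    rw [k1, xpmVar_mk, if_neg (by omega)]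
    unfold Xpm
    rw [dif_pos (⟨by omega, by omega⟩ : 0 ≤ (t:ℤ)/2 ∧ ((t:ℤ)/2).toNat < n)]
    have hv : ((t:ℤ)/2).toNat = (t+1)/2 := by omega
    simp only [hv]
  · rw [Nat.odd_iff] at hto
    have ht2 : ¬ ((t : ℤ) % 2 = 0) := by omega
    rw [if_neg ht2]
    have hk : keyN t = t - 1 := by unfold keyN; split <;> omega
    have k1 : (⟨keyN t, keyN_lt hlt⟩ : Fin (2*n)) = ⟨t-1, by omega⟩ := Fin.ext hk
    rw [k1, xpmVar_mk, if_pos (by omega)]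
    unfold Xpm
    rw [dif_pos (⟨by omega, by omega⟩ : 0 ≤ ((t:ℤ)+1)/2 - 1 ∧ (((t:ℤ)+1)/2 - 1).toNat < n)]
    have hv : (((t:ℤ)+1)/2 - 1).toNat = (t-1)/2 := by omega
    simp only [hv]

/- ### the closed form -/

noncomputable def Phi (n : ℕ) (a b c : ℤ) (t : ℕ) (p : Pt) : Laur n :=
  if p.1 + 2 ≤ p.2 then Ee n t (c - p.1) + Ee n t (2*(n:ℤ)+a+b-c - p.1)
  else if p.2 = p.1 + 1 then Ee n t (c - p.1) + Ee n (t+1) (2*(n:ℤ)+a+b-c - p.1)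
  else if p.2 = p.1 then Ee n t (c - p.1)
  else Ee n (t+1) (c - p.1)

lemma Phi_ge (n : ℕ) (a b c : ℤ) (t : ℕ) (p : Pt) (h : p.1 + 2 ≤ p.2) :
    Phi n a b c t p = Ee n t (c - p.1) + Ee n t (2*(n:ℤ)+a+b-c - p.1) := if_pos h

lemma Phi_one (n : ℕ) (a b c : ℤ) (t : ℕ) (p : Pt) (h : p.2 = p.1 + 1) :
    Phi n a b c t p = Ee n t (c - p.1) + Ee n (t+1) (2*(n:ℤ)+a+b-c - p.1) := by
  unfold Phi; rw [if_neg (by omega), if_pos h]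

lemma Phi_zero (n : ℕ) (a b c : ℤ) (t : ℕ) (p : Pt) (h : p.2 = p.1) :
    Phi n a b c t p = Ee n t (c - p.1) := by
  unfold Phi; rw [if_neg (by omega), if_neg (by omega), if_pos h]

lemma Phi_neg (n : ℕ) (a b c : ℤ) (t : ℕ) (p : Pt) (h : p.2 = p.1 - 1) :
    Phi n a b c t p = Ee n (t+1) (c - p.1) := by
  unfold Phi; rw [if_neg (by omega), if_neg (by omega), if_neg (by omega)]

/- ### the main induction -/

lemma main_ind (n : ℕ) (a b c : ℤ) (hab : (a+b) % 2 = 0)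
    (hcd : c - 1 < 2*(n:ℤ)+a+b-c) :
    ∀ (k t : ℕ), t + k = 2 * n → ∀ p : Pt, p.1 + p.2 = a + b + t → p.1 - 1 ≤ p.2 →
      SumV n a b c p = Phi n a b c t p := by
  intro k
  induction k using Nat.strong_induction_on with
  | _ k ih =>
  intro t htk p hpt habv
  obtain ⟨u, v⟩ := p
  dsimp only at hpt habv
  rcases Nat.eq_zero_or_pos k with rfl | hk
  · -- base case : t = 2 * n
    have ht2n : t = 2 * n := by omega
    subst ht2n
    rw [SumV_top n a b c (u,v) (by dsimp only; push_cast at hpt ⊢; omega) habv]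
    have hcases : v = u - 1 ∨ v = u ∨ v = u + 1 ∨ u + 2 ≤ v := by omega
    have hfst : ∀ q r : ℤ, ((u,v) : Pt) = ((q, r) : Pt) → u = q ∧ v = r := by
      intro q r h
      exact ⟨congrArg Prod.fst h, congrArg Prod.snd h⟩
    rcases hcases with hv | hv | hv | hv
    · rw [Phi_neg n a b c _ _ (by dsimp only; omega)]
      dsimp only
      rw [Ee_top (by omega), if_neg (by intro h; obtain ⟨h1, h2⟩ := hfst _ _ h; omega),
        if_neg (by push_cast at hpt; omega)]
    · rw [Phi_zero n a b c _ _ (by dsimp only; omega)]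
      dsimp only
      rw [Ee_top (by omega)]
      by_cases hu : u = c
      · rw [if_pos (by rw [hu]; congr 1; push_cast at hpt; omega),
          if_pos (by omega)]
      · rw [if_neg (by intro h; exact hu (hfst _ _ h).1), if_neg (by omega)]
    · exfalso; push_cast at hpt; omega
    · rw [Phi_ge n a b c _ _ (by dsimp only; omega)]
      dsimp only
      rw [Ee_top (by omega), Ee_top (by omega)]
      by_cases hu : u = c
      · rw [if_pos (by rw [hu]; congr 1; push_cast at hpt; omega),
          if_pos (by omega), if_neg (by push_cast at hpt; omega)]
        norm_num
      · rw [if_neg (by intro h; exact hu (hfst _ _ h).1), if_neg (by omega),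
          if_neg (by push_cast at hpt; omega)]
        norm_num
  · -- inductive step : t < 2 * n
    have hlt : t < 2 * n := by omega
    rw [SumV_cons n a b c (u,v) habv (by dsimp only; push_cast at hpt ⊢; omega)]
    rw [stepW_eq n a b t (u,v) hpt hlt]
    have hH : ((u,v) : Pt) + ((1:ℤ),(0:ℤ)) = ((u+1, v) : Pt) := by simp
    have hV : ((u,v) : Pt) + ((0:ℤ),(1:ℤ)) = ((u, v+1) : Pt) := by simp
    have hD2 : ((u,v) : Pt) + ((2:ℤ),(0:ℤ)) = ((u+2, v) : Pt) := by simp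
    rw [hH, hV, hD2]
    have hcases : v = u - 1 ∨ v = u ∨ v = u + 1 ∨ v = u + 2 ∨ u + 3 ≤ v := by
      omega
    have hdcond : (((u,v) : Pt).2 = ((u,v) : Pt).1 + 2) = (v = u + 2) := by rfl
    rcases hcases with hv | hv | hv | hv | hv
    · -- v = u - 1 : only the vertical step contributes
      rw [SumV_below n a b c (u+1, v) (by dsimp only; omega)]
      rw [ih (k-1) (by omega) (t+1) (by omega) (u, v+1)
        (by dsimp only; push_cast; omega) (by dsimp only; omega)]
      rw [Phi_neg n a b c t (u,v) (by dsimp only; omega),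
        Phi_zero n a b c (t+1) (u, v+1) (by dsimp only; omega)]
      rw [if_neg (show ¬ v = u + 2 by omega)]
      ring
    · -- v = u : t even
      have hteven : t % 2 = 0 := by push_cast at hpt; omega
      have h2n2 : t + 2 ≤ 2 * n := by omega
      rw [ih (k-1) (by omega) (t+1) (by omega) (u+1, v)
        (by dsimp only; push_cast; omega) (by dsimp only; omega)]
      rw [ih (k-1) (by omega) (t+1) (by omega) (u, v+1)
        (by dsimp only; push_cast; omega) (by dsimp only; omega)]
      rw [Phi_zero n a b c t (u,v) (by dsimp only; omega),
        Phi_neg n a b c (t+1) (u+1, v) (by dsimp only; omega),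
        Phi_one n a b c (t+1) (u, v+1) (by dsimp only; omega)]
      rw [if_neg (show ¬ v = u + 2 by omega)]
      rw [show t + 1 + 1 = t + 2 from rfl]
      rw [show c - (u+1) = c - u - 1 from by ring]
      rw [Ee_split hlt (c - u), Ee_split (show t + 1 < 2*n by omega) (c - u - 1)]
      rw [show t + 1 + 1 = t + 2 from rfl, show c - u - 1 - 1 = c - u - 2 from by ring]
      have hsymm := Ee_symm (n := n) ((2*n - (t+2))/2) (t+2) (by omega) (by omega) (c - u - 2)
      rw [show (2*(n:ℤ) - ((t+2 : ℕ) : ℤ) - (c - u - 2)) = 2*(n:ℤ)+a+b-c - u from by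
        push_cast at hpt ⊢; omega] at hsymm
      rw [hsymm]
      have hw := wv_mul hteven (show t + 1 < 2*n by omega)
      linear_combination (-(Ee n (t+2) (2*(n:ℤ)+a+b-c - u))) * hw
    · -- v = u + 1 : t odd
      rw [ih (k-1) (by omega) (t+1) (by omega) (u+1, v)
        (by dsimp only; push_cast; omega) (by dsimp only; omega)]
      rw [ih (k-1) (by omega) (t+1) (by omega) (u, v+1)
        (by dsimp only; push_cast; omega) (by dsimp only; omega)]
      rw [Phi_one n a b c t (u,v) (by dsimp only; omega),
        Phi_zero n a b c (t+1) (u+1, v) (by dsimp only; omega),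
        Phi_ge n a b c (t+1) (u, v+1) (by dsimp only; omega)]
      rw [if_neg (show ¬ v = u + 2 by omega)]
      rw [show c - (u+1) = c - u - 1 from by ring]
      rw [Ee_split hlt (c - u)]
      ring
    · -- v = u + 2 : t even, double step allowed
      have hteven : t % 2 = 0 := by push_cast at hpt; omega
      have h2n2 : t + 2 ≤ 2 * n := by omega
      have hk2 : 2 ≤ k := by omega
      rw [ih (k-1) (by omega) (t+1) (by omega) (u+1, v)
        (by dsimp only; push_cast; omega) (by dsimp only; omega)]
      rw [ih (k-1) (by omega) (t+1) (by omega) (u, v+1)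
        (by dsimp only; push_cast; omega) (by dsimp only; omega)]
      rw [ih (k-2) (by omega) (t+2) (by omega) (u+2, v)
        (by dsimp only; push_cast; omega) (by dsimp only; omega)]
      rw [Phi_ge n a b c t (u,v) (by dsimp only; omega),
        Phi_one n a b c (t+1) (u+1, v) (by dsimp only; omega),
        Phi_ge n a b c (t+1) (u, v+1) (by dsimp only; omega),
        Phi_zero n a b c (t+2) (u+2, v) (by dsimp only; omega)]
      rw [if_pos (show v = u + 2 by omega)]
      rw [show t + 1 + 1 = t + 2 from rfl]
      rw [show c - (u+1) = c - u - 1 from by ring,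
        show 2*(n:ℤ)+a+b-c - (u+1) = 2*(n:ℤ)+a+b-c - u - 1 from by ring,
        show c - (u+2) = c - u - 2 from by ring]
      rw [Ee_split hlt (c - u), Ee_split hlt (2*(n:ℤ)+a+b-c - u),
        Ee_split (show t + 1 < 2*n by omega) (2*(n:ℤ)+a+b-c - u - 1)]
      rw [show t + 1 + 1 = t + 2 from rfl,
        show 2*(n:ℤ)+a+b-c - u - 1 - 1 = 2*(n:ℤ)+a+b-c - u - 2 from by ring]
      have hsymm := Ee_symm (n := n) ((2*n - (t+2))/2) (t+2) (by omega) (by omega)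
        (2*(n:ℤ)+a+b-c - u - 2)
      rw [show (2*(n:ℤ) - ((t+2 : ℕ) : ℤ) - (2*(n:ℤ)+a+b-c - u - 2)) = c - u - 2 from by
        push_cast at hpt ⊢; omega] at hsymm
      rw [hsymm]
      have hw := wv_mul hteven (show t + 1 < 2*n by omega)
      linear_combination (-(Ee n (t+2) (c - u - 2))) * hw
    · -- v ≥ u + 3 : generic
      rw [ih (k-1) (by omega) (t+1) (by omega) (u+1, v)
        (by dsimp only; push_cast; omega) (by dsimp only; omega)]
      rw [ih (k-1) (by omega) (t+1) (by omega) (u, v+1)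
        (by dsimp only; push_cast; omega) (by dsimp only; omega)]
      rw [Phi_ge n a b c t (u,v) (by dsimp only; omega),
        Phi_ge n a b c (t+1) (u+1, v) (by dsimp only; omega),
        Phi_ge n a b c (t+1) (u, v+1) (by dsimp only; omega)]
      rw [if_neg (show ¬ v = u + 2 by omega)]
      rw [show c - (u+1) = c - u - 1 from by ring,
        show 2*(n:ℤ)+a+b-c - (u+1) = 2*(n:ℤ)+a+b-c - u - 1 from by ring]
      rw [Ee_split hlt (c - u), Ee_split hlt (2*(n:ℤ)+a+b-c - u)]
      ring

/-- **(Corollary: even orthogonal paths.)** For `a + b` even and `(a,b)`,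
`(c, 2n+a+b-c)` strictly above `y = x - 1`, the generating function of lattice
paths from `(a,b)` to `(c, 2n+a+b-c)` with steps `(1,0), (0,1), (2,0)`, double
steps only ending on `y = x` (weight `1`), staying weakly above `y = x - 1`,
equals `e_{c-a}(x^±)` if `b = a`, and `e_{c-a}(x^±) + e_{c-b}(x^±)` if
`b - a ≥ 2`. -/
theorem stmt8 (n : ℕ) (a b c : ℤ) (hab : (a + b) % 2 = 0)
    (h1 : a - 1 < b) (h2 : c - 1 < 2 * (n : ℤ) + a + b - c) :
    (b = a →
      (∑ᶠ (l : List Pt) (_ :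
          (∀ s ∈ l, s = ((1:ℤ),(0:ℤ)) ∨ s = ((0:ℤ),(1:ℤ)) ∨ s = ((2:ℤ),(0:ℤ))) ∧
          (a, b) + l.sum = (c, 2 * (n : ℤ) + a + b - c) ∧
          (∀ p ∈ pathPoints (a, b) l, p.1 - 1 ≤ p.2) ∧
          DoubleOK (a, b) l),
        pathW n a b (a, b) l)
        = epm n (c - a)) ∧
    (2 ≤ b - a →
      (∑ᶠ (l : List Pt) (_ :
          (∀ s ∈ l, s = ((1:ℤ),(0:ℤ)) ∨ s = ((0:ℤ),(1:ℤ)) ∨ s = ((2:ℤ),(0:ℤ))) ∧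
          (a, b) + l.sum = (c, 2 * (n : ℤ) + a + b - c) ∧
          (∀ p ∈ pathPoints (a, b) l, p.1 - 1 ≤ p.2) ∧
          DoubleOK (a, b) l),
        pathW n a b (a, b) l)
        = epm n (c - a) + epm n (c - b)) := by
  have hmain := main_ind n a b c hab h2 (2*n) 0 (by omega) ((a,b) : Pt)
    (by dsimp only; push_cast; ring) (by dsimp only; omega)
  have hsum : (∑ᶠ (l : List Pt) (_ :
      (∀ s ∈ l, s = ((1:ℤ),(0:ℤ)) ∨ s = ((0:ℤ),(1:ℤ)) ∨ s = ((2:ℤ),(0:ℤ))) ∧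
      (a, b) + l.sum = (c, 2 * (n : ℤ) + a + b - c) ∧
      (∀ p ∈ pathPoints (a, b) l, p.1 - 1 ≤ p.2) ∧
      DoubleOK (a, b) l),
    pathW n a b (a, b) l) = SumV n a b c ((a,b) : Pt) := rfl
  constructor
  · intro hba
    rw [hsum, hmain, Phi_zero n a b c 0 ((a,b) : Pt) (by dsimp only; omega)]
    dsimp only
    exact Ee_eq_epm n (c - a)
  · intro hba
    rw [hsum, hmain, Phi_ge n a b c 0 ((a,b) : Pt) (by dsimp only; omega)]
    dsimp only
    have hsymm := Ee_symm (n := n) n 0 (by omega) (by omega) (2*(n:ℤ)+a+b-c - a)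
    rw [show (2*(n:ℤ) - ((0 : ℕ) : ℤ) - (2*(n:ℤ)+a+b-c - a)) = c - b from by push_cast; ring]
      at hsymm
    rw [hsymm, Ee_eq_epm, Ee_eq_epm]
end

section
/- For a partition λ contained in the rectangle (N^M), the sets {λ_i + M − i + 1 : 1 ≤ i ≤ M} and {M + j − λ'_j : 1 ≤ j ≤ N} are disjoint and their union is {1, 2, ..., N+M}. -/
/-- The conjugate partition of `λ` (with at most `M` parts, given as a function
`ℕ → ℕ`, 0-based): `conjP M λ k` is the number of rows `r < M` with `λ_r ≥ k`,
for a 1-based column index `k`. -/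
def conjP (M : ℕ) (lam : ℕ → ℕ) (k : ℕ) : ℕ :=
  ((Finset.range M).filter fun r => k ≤ lam r).card

/-- For a partition `λ ⊆ (N^M)`, the sets `{λ_i + M - i + 1 : 1 ≤ i ≤ M}` and
`{M + j - λ'_j : 1 ≤ j ≤ N}` are disjoint and their union is `{1, …, N + M}`.
(With 0-based indexing `i = i₀ + 1`, the first set is `{λ_{i₀} + M - i₀}`.) -/
theorem stmt16 (N M : ℕ) (lam : ℕ → ℕ)
    (hdec : ∀ r, lam (r + 1) ≤ lam r) (hN : lam 0 ≤ N)
    (hM : ∀ r, M ≤ r → lam r = 0) :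
    Disjoint ((Finset.range M).image fun i => lam i + M - i)
      ((Finset.range N).image fun j => M + (j + 1) - conjP M lam (j + 1)) ∧
    ((Finset.range M).image fun i => lam i + M - i) ∪
      ((Finset.range N).image fun j => M + (j + 1) - conjP M lam (j + 1))
      = Finset.Icc 1 (N + M) := by
  have hanti : ∀ a b : ℕ, a ≤ b → lam b ≤ lam a := fun a b h =>
    antitone_nat_of_succ_le hdec h
  have hcle : ∀ k, conjP M lam k ≤ M := fun k =>
    le_trans (Finset.card_filter_le _ _) (by simp)
  have hNall : ∀ i, lam i ≤ N := fun i => le_trans (hanti 0 i (Nat.zero_le _)) hN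
  -- key equivalence
  have hkey : ∀ r k : ℕ, 1 ≤ k → (k ≤ lam r ↔ r < conjP M lam k) := by
    intro r k hk
    constructor
    · intro h
      have hrM : r < M := by
        by_contra hr
        have := hM r (le_of_not_gt hr); omega
      have hsub : Finset.range (r + 1) ⊆
          (Finset.range M).filter fun s => k ≤ lam s := by
        intro s hs
        simp only [Finset.mem_range] at hs
        simp only [Finset.mem_filter, Finset.mem_range]
        exact ⟨lt_of_lt_of_le hs hrM, le_trans h (hanti s r (by omega))⟩
      have := Finset.card_le_card hsub
      simpa [conjP] using this
    · intro hlt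
      by_contra hnk
      have hsub : ((Finset.range M).filter fun s => k ≤ lam s) ⊆
          Finset.range r := by
        intro s hs
        simp only [Finset.mem_filter, Finset.mem_range] at hs ⊢
        by_contra hsr
        have := hanti r s (le_of_not_gt hsr)
        omega
      have := Finset.card_le_card hsub
      simp only [Finset.card_range] at this
      unfold conjP at hlt
      omega
  -- disjointness
  have hdisj : Disjoint ((Finset.range M).image fun i => lam i + M - i)
      ((Finset.range N).image fun j => M + (j + 1) - conjP M lam (j + 1)) := by
    rw [Finset.disjoint_left]
    rintro v hA hB
    simp only [Finset.mem_image, Finset.mem_range] at hA hB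
    obtain ⟨i, hi, hfi⟩ := hA
    obtain ⟨j, hj, hgj⟩ := hB
    have hc := hcle (j + 1)
    by_cases hcase : j + 1 ≤ lam i
    · have h1 : i < conjP M lam (j + 1) := (hkey i (j + 1) (by omega)).1 hcase
      omega
    · have h2 : ¬ i < conjP M lam (j + 1) := fun h =>
        hcase ((hkey i (j + 1) (by omega)).2 h)
      push_neg at h2
      omega
  refine ⟨hdisj, ?_⟩
  -- the union: cardinality argument
  have hAcard : ((Finset.range M).image fun i => lam i + M - i).card = M := by
    rw [Finset.card_image_of_injOn, Finset.card_range]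
    intro i1 h1 i2 h2 heq
    simp only [Finset.mem_coe, Finset.mem_range] at h1 h2
    have heq' : lam i1 + M - i1 = lam i2 + M - i2 := heq
    rcases Nat.lt_trichotomy i1 i2 with h | h | h
    · have := hanti i1 i2 (by omega); omega
    · exact h
    · have := hanti i2 i1 (by omega); omega
  have hBcard : ((Finset.range N).image fun j =>
      M + (j + 1) - conjP M lam (j + 1)).card = N := by
    rw [Finset.card_image_of_injOn, Finset.card_range]
    intro j1 h1 j2 h2 heq
    simp only [Finset.mem_coe, Finset.mem_range] at h1 h2
    have heq' : M + (j1 + 1) - conjP M lam (j1 + 1)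
        = M + (j2 + 1) - conjP M lam (j2 + 1) := heq
    have hmono : ∀ a b : ℕ, a ≤ b → conjP M lam b ≤ conjP M lam a := by
      intro a b hab
      apply Finset.card_le_card
      intro s hs
      simp only [Finset.mem_filter, Finset.mem_range] at hs ⊢
      exact ⟨hs.1, le_trans hab hs.2⟩
    rcases Nat.lt_trichotomy j1 j2 with h | h | h
    · have := hmono (j1 + 1) (j2 + 1) (by omega)
      have := hcle (j2 + 1); have := hcle (j1 + 1)
      omega
    · exact h
    · have := hmono (j2 + 1) (j1 + 1) (by omega)
      have := hcle (j2 + 1); have := hcle (j1 + 1)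
      omega
  apply Finset.eq_of_subset_of_card_le
  · intro v hv
    simp only [Finset.mem_union, Finset.mem_image, Finset.mem_range] at hv
    simp only [Finset.mem_Icc]
    rcases hv with ⟨i, hi, hfi⟩ | ⟨j, hj, hgj⟩
    · have := hNall i; omega
    · have := hcle (j + 1); omega
  · rw [Finset.card_union_of_disjoint hdisj, hAcard, hBcard, Nat.card_Icc]
    omega
end
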